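/- Let π be a set of primes and H, K two N^π-Dnormal subgroups of a finite group G. Then the join ⟨H, K⟩ is N^π-Dnormal in G. -/

import Mathlib

/-- A (finite) group is a `π`-group if every prime dividing its order lies in `π`. -/
def IsPiGroup (π : Set ℕ) (G : Type*) [Group G] : Prop :=
  ∀ p : ℕ, p.Prime → p ∣ Nat.card G → p ∈ π

/-- `O^π(G)`: the smallest normal subgroup of `G` whose quotient is a `π`-group
(recall that `N.index = Nat.card (G ⧸ N)`). -/
def piResidual (π : Set ℕ) (G : Type*) [Group G] : Subgroup G :=
  ⨅ N ∈ {N : Subgroup G | N.Normal ∧ ∀ p : ℕ, p.Prime → p ∣ N.index → p ∈ π}, N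

/-- `O_π(G)`: the largest normal `π`-subgroup of `G`. -/
def piCore (π : Set ℕ) (G : Type*) [Group G] : Subgroup G :=
  ⨆ N ∈ {N : Subgroup G | N.Normal ∧ IsPiGroup π N}, N

/-- `O^π(H)` for a subgroup `H ≤ G`, regarded as a subgroup of `G`. -/
def piResidualIn (π : Set ℕ) {G : Type*} [Group G] (H : Subgroup G) : Subgroup G :=
  (piResidual π H).map H.subtype

/-- `H` is `N^π`-Dnormal in `G`: if `|π| ≤ 1` this means `H` is normal in `G`; if
`|π| ≥ 2` it means that `O^π(H)` is normal in `G` and `O^π(G)` normalizes `H`. -/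
def IsDnormal (π : Set ℕ) {G : Type*} [Group G] (H : Subgroup G) : Prop :=
  (π.Subsingleton ∧ H.Normal) ∨
  (¬ π.Subsingleton ∧ (piResidualIn π H).Normal ∧ piResidual π G ≤ Subgroup.normalizer (H : Set G))

/-- `S` is `N^π`-Dsubnormal in `G`: there is a chain `S = S₀ ≤ S₁ ≤ ⋯ ≤ Sₙ = G`
with each `Sᵢ` being `N^π`-Dnormal in `Sᵢ₊₁`. -/
def IsDsubnormal (π : Set ℕ) {G : Type*} [Group G] (S : Subgroup G) : Prop :=
  ∃ (n : ℕ) (c : Fin (n + 1) → Subgroup G), c 0 = S ∧ c (Fin.last n) = ⊤ ∧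
    ∀ i : Fin n, c i.castSucc ≤ c i.succ ∧
      IsDnormal π ((c i.castSucc).subgroupOf (c i.succ))

/-- `H` is subnormal in `G`. -/
def IsSubnormal' {G : Type*} [Group G] (H : Subgroup G) : Prop :=
  ∃ (n : ℕ) (c : Fin (n + 1) → Subgroup G), c 0 = H ∧ c (Fin.last n) = ⊤ ∧
    ∀ i : Fin n, c i.castSucc ≤ c i.succ ∧
      ((c i.castSucc).subgroupOf (c i.succ)).Normal

/-- The class `N^π`: groups that are the (internal) direct product of a `π`-group and a
nilpotent `π'`-group. -/
def IsNPiGroup (π : Set ℕ) (G : Type*) [Group G] : Prop :=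
  ∃ H K : Subgroup G, H.Normal ∧ K.Normal ∧ H ⊓ K = ⊥ ∧ H ⊔ K = ⊤ ∧
    IsPiGroup π H ∧ IsPiGroup πᶜ K ∧ Group.IsNilpotent K

/-- The `N^π`-residual `G^{N^π}`: the smallest normal subgroup of `G` whose quotient
belongs to the class `N^π`. -/
def nPiResidual (π : Set ℕ) (G : Type*) [Group G] : Subgroup G :=
  ⨅ N ∈ {N : Subgroup G | ∃ h : N.Normal, letI := h; IsNPiGroup π (G ⧸ N)}, N

/-- `G` is `π'`-soluble: it has a normal series each of whose factors is either a
`π`-group or a `p`-group for some prime `p ∉ π`. -/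
def IsPiPrimeSoluble (π : Set ℕ) (G : Type*) [Group G] : Prop :=
  ∃ (n : ℕ) (c : Fin (n + 1) → Subgroup G), c 0 = ⊥ ∧ c (Fin.last n) = ⊤ ∧
    ∀ i : Fin n, c i.castSucc ≤ c i.succ ∧
      ((c i.castSucc).subgroupOf (c i.succ)).Normal ∧
      ((∀ p : ℕ, p.Prime → p ∣ ((c i.castSucc).subgroupOf (c i.succ)).index → p ∈ π) ∨
        ∃ p : ℕ, p.Prime ∧ p ∉ π ∧
          ∃ k : ℕ, ((c i.castSucc).subgroupOf (c i.succ)).index = p ^ k)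

/-- An `N^π`-Fitting set of `G`. -/
def IsNPiFittingSet (π : Set ℕ) {G : Type*} [Group G] (F : Set (Subgroup G)) : Prop :=
  F.Nonempty ∧
  (∀ S ∈ F, ∀ T : Subgroup G, T ≤ S → IsDsubnormal π (T.subgroupOf S) → T ∈ F) ∧
  (∀ S ∈ F, ∀ T ∈ F, IsDnormal π (S.subgroupOf (S ⊔ T)) →
    IsDnormal π (T.subgroupOf (S ⊔ T)) → S ⊔ T ∈ F) ∧
  (∀ S ∈ F, ∀ x : G, S.map (MulAut.conj x).toMonoidHom ∈ F)

/-- The `F`-radical `H_F` of a subgroup `H` of `G`: the join of all subgroups of `H`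
belonging to `F` that are normal in `H`. -/
def fittingRadical {G : Type*} [Group G] (F : Set (Subgroup G)) (H : Subgroup G) : Subgroup G :=
  ⨆ S ∈ {S : Subgroup G | S ∈ F ∧ S ≤ H ∧ (S.subgroupOf H).Normal}, S

/-- `M` is an `F`-maximal subgroup of `K`. -/
def IsFMaximalIn {G : Type*} [Group G] (F : Set (Subgroup G)) (M K : Subgroup G) : Prop :=
  M ∈ F ∧ M ≤ K ∧ ∀ S ∈ F, S ≤ K → M ≤ S → S = M

/-- `V` is an `F`-injector of `G`. -/
def IsInjector {G : Type*} [Group G] (F : Set (Subgroup G)) (V : Subgroup G) : Prop :=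
  ∀ K : Subgroup G, IsSubnormal' K → IsFMaximalIn F (V ⊓ K) K

/-- `V` is an `F`-injector of the subgroup `N` of `G`. -/
def IsInjectorIn {G : Type*} [Group G] (F : Set (Subgroup G)) (V N : Subgroup G) : Prop :=
  V ≤ N ∧ ∀ K : Subgroup G, K ≤ N → IsSubnormal' (K.subgroupOf N) → IsFMaximalIn F (V ⊓ K) K

/-- `M` is an `N^π`-maximal subgroup of `X`. -/
def IsNPiMaximal (π : Set ℕ) {X : Type*} [Group X] (M : Subgroup X) : Prop :=
  IsNPiGroup π M ∧ ∀ M' : Subgroup X, IsNPiGroup π M' → M ≤ M' → M' = M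

/-- `U` is an `N^π`-projector of `G`: `UK/K` is `N^π`-maximal in `G/K` for every
normal subgroup `K` of `G`. -/
def IsNPiProjector (π : Set ℕ) {G : Type*} [Group G] (U : Subgroup G) : Prop :=
  ∀ K : Subgroup G, ∀ hK : K.Normal,
    letI := hK
    IsNPiMaximal π ((U ⊔ K).map (QuotientGroup.mk' K))

/-- An `N^π`-Fitting class of (finite) groups: a non-empty isomorphism-closed class
closed under `N^π`-Dnormal subgroups and under joins of pairs of `N^π`-Dnormal
subgroups. -/
def IsNPiFittingClass (π : Set ℕ) (F : (H : Type) → [_inst : Group H] → Prop) : Prop :=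
  (∃ (H : Type) (g : Group H) (_ : Finite H), F H (_inst := g)) ∧
  (∀ (H K : Type) [Group H] [Group K] [Finite H] [Finite K],
    F H → Nonempty (H ≃* K) → F K) ∧
  (∀ (H : Type) [Group H] [Finite H] (N : Subgroup H),
    F H → IsDnormal π N → F ↥N) ∧
  (∀ (H : Type) [Group H] [Finite H] (M N : Subgroup H),
    F ↥M → F ↥N → IsDnormal π M → IsDnormal π N → M ⊔ N = ⊤ → F H)

/-! If `O^π(H)` and `O^π(K)` are normal in `X = ⟨H, K⟩`, then modulo `N = O^π(H) O^π(K)` the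
images of `H` and `K` are `π`-groups normalized by `O^π(X/N)`, and `X/N` is generated by them.
Such a group `Q = ⟨A, B⟩` is a `π`-group: with `R = O^π(Q)` we have `[R, A] ≤ R ∩ A` and
`[R, B] ≤ R ∩ B`, so `R` becomes central modulo the normal `π`-subgroup `(R ∩ A)(R ∩ B)`; and a
group generated by two `π`-subgroups whose `π`-residual is central is a `π`-group by transfer
into the centre. Hence `O^π(X) = O^π(H) O^π(K)`, which is normal in `G`. -/

open Subgroup
open scoped commutatorElement

def IsPiNat (π : Set ℕ) (n : ℕ) : Prop :=
  ∀ p : ℕ, p.Prime → p ∣ n → p ∈ π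

namespace IsPiNat

variable {π : Set ℕ} {m n : ℕ}

theorem of_dvd (hn : IsPiNat π n) (hmn : m ∣ n) : IsPiNat π m :=
  fun p hp hpm => hn p hp (hpm.trans hmn)

theorem mul (hm : IsPiNat π m) (hn : IsPiNat π n) : IsPiNat π (m * n) :=
  fun p hp hpmn => (hp.dvd_mul.mp hpmn).elim (hm p hp) (hn p hp)

theorem one : IsPiNat π 1 :=
  fun _ hp hp1 => (hp.not_dvd_one hp1).elim

end IsPiNat

section Cardinality

variable {π : Set ℕ} {G : Type*} [Group G]

theorem isPiGroup_iff : IsPiGroup π G ↔ IsPiNat π (Nat.card G) :=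
  Iff.rfl

theorem isPiNat_card_of_subgroup (H : Subgroup G) (hH : IsPiNat π (Nat.card H))
    (hG : IsPiNat π H.index) : IsPiNat π (Nat.card G) :=
  H.card_mul_index ▸ hH.mul hG

theorem isPiNat_card_of_pow_eq_one [Finite G] {m : ℕ} (hm : IsPiNat π m)
    (h : ∀ g : G, g ^ m = 1) : IsPiNat π (Nat.card G) := by
  intro p hp hpG
  have := Fact.mk hp
  obtain ⟨g, hg⟩ := exists_prime_orderOf_dvd_card' p hpG
  exact hm p hp (hg ▸ orderOf_dvd_of_pow_eq_one (h g))

theorem relIndex_sup_of_le_normalizer {H K : Subgroup G} (hK : K ≤ normalizer H) :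
    H.relIndex (K ⊔ H) = H.relIndex K := by
  rw [← relIndex_subgroupOf (sup_le hK le_normalizer), ← relIndex_subgroupOf hK,
    subgroupOf_sup hK le_normalizer, relIndex_sup_right]

theorem card_sup_dvd_of_le_normalizer {H K : Subgroup G} (hK : K ≤ normalizer H) :
    Nat.card ↥(K ⊔ H) ∣ Nat.card K * Nat.card H := by
  rw [← relIndex_bot_left, ← relIndex_mul_relIndex ⊥ H _ bot_le le_sup_right,
    relIndex_sup_of_le_normalizer hK, relIndex_bot_left, mul_comm]
  exact mul_dvd_mul_right (relIndex_dvd_card H K) _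

theorem IsPiGroup.sup_of_le_normalizer {H K : Subgroup G} (hK : IsPiGroup π K)
    (hH : IsPiGroup π H) (hKH : K ≤ normalizer H) : IsPiGroup π ↥(K ⊔ H) :=
  ((isPiGroup_iff.mp hK).mul hH).of_dvd (card_sup_dvd_of_le_normalizer hKH)

theorem IsPiGroup.of_le {H K : Subgroup G} (hK : IsPiGroup π K) (hHK : H ≤ K) :
    IsPiGroup π H :=
  isPiGroup_iff.mp hK |>.of_dvd (card_dvd_of_le hHK)

theorem IsPiGroup.map {Q : Type*} [Group Q] {H : Subgroup G} (hH : IsPiGroup π H)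
    (f : G →* Q) : IsPiGroup π (H.map f) :=
  isPiGroup_iff.mp hH |>.of_dvd (card_map_dvd H f)

end Cardinality

section Normalizer

variable {G : Type*} [Group G]

theorem mem_normalizer_of_map_conj_le [Finite G] {H : Subgroup G} {x : G}
    (h : H.map (MulAut.conj x) ≤ H) : x ∈ normalizer H :=
  mem_normalizer_iff_map_conj_eq.mpr <| eq_of_le_of_card_ge h <|
    (card_map_of_injective (MulAut.conj x).injective).ge

theorem commutator_le_inf_of_le_normalizer {R A : Subgroup G} [R.Normal]
    (h : R ≤ normalizer A) : ⁅R, A⁆ ≤ R ⊓ A := by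
  refine le_inf (commutator_le_left R A) (commutator_le.mpr fun r hr a ha => ?_)
  rw [commutatorElement_def]
  exact mul_mem ((mem_normalizer_iff.mp (h hr) a).mp ha) (inv_mem ha)

theorem le_normalizer_inf_sup_inf [Finite G] {R A : Subgroup G} [R.Normal]
    (hA : R ≤ normalizer A) (B : Subgroup G) : A ≤ normalizer ↑((R ⊓ A) ⊔ (R ⊓ B)) := by
  intro a ha
  refine mem_normalizer_of_map_conj_le ?_
  rw [Subgroup.map_sup, sup_le_iff, map_le_iff_le_comap, map_le_iff_le_comap]
  constructor
  · intro p hp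
    obtain ⟨hpR, hpA⟩ := mem_inf.mp hp
    rw [mem_comap, MonoidHom.coe_coe, MulAut.conj_apply]
    exact mem_sup_left <| mem_inf.mpr ⟨Normal.conj_mem inferInstance p hpR a,
      mul_mem (mul_mem ha hpA) (inv_mem ha)⟩
  · intro p hp
    obtain ⟨hpR, -⟩ := mem_inf.mp hp
    have hap : ⁅a, p⁆ ∈ R ⊓ A := commutator_le_inf_of_le_normalizer hA <|
      commutator_comm A R ▸ commutator_mem_commutator ha hpR
    rw [mem_comap, MonoidHom.coe_coe, MulAut.conj_apply, show a * p * a⁻¹ = ⁅a, p⁆ * p by group]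
    exact mul_mem (mem_sup_left hap) (mem_sup_right hp)

theorem normal_inf_sup_inf [Finite G] {R A B : Subgroup G} [R.Normal] (hAB : A ⊔ B = ⊤)
    (hA : R ≤ normalizer A) (hB : R ≤ normalizer B) : ((R ⊓ A) ⊔ (R ⊓ B)).Normal := by
  rw [← normalizer_eq_top_iff, eq_top_iff, ← hAB]
  refine sup_le (le_normalizer_inf_sup_inf hA B) ?_
  rw [sup_comm]
  exact le_normalizer_inf_sup_inf hB A

end Normalizer

section PiResidual

variable {π : Set ℕ} {G : Type*} [Group G]

theorem piResidual_eq_sInf :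
    piResidual π G = sInf {N : Subgroup G | N.Normal ∧ IsPiNat π N.index} :=
  sInf_eq_iInf.symm

instance piResidual_normal : (piResidual π G).Normal where
  conj_mem n hn g := by
    simp only [piResidual, mem_iInf] at hn ⊢
    exact fun N hN => hN.1.conj_mem n (hn N hN) g

theorem piResidual_le {N : Subgroup G} [hN : N.Normal] (h : IsPiNat π N.index) :
    piResidual π G ≤ N :=
  piResidual_eq_sInf (G := G) ▸ sInf_le ⟨hN, h⟩

theorem isPiNat_index_piResidual [Finite G] : IsPiNat π (piResidual π G).index := by
  have hclosed : InfClosed {N : Subgroup G | N.Normal ∧ IsPiNat π N.index} := by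
    rintro M ⟨hM, hMπ⟩ N ⟨hN, hNπ⟩
    refine ⟨inferInstance, (hMπ.mul hNπ).of_dvd ?_⟩
    rw [← relIndex_mul_index inf_le_right, inf_relIndex_right]
    exact mul_dvd_mul_right (relIndex_dvd_index_of_normal M N) _
  rw [piResidual_eq_sInf]
  have htop : (⊤ : Subgroup G).Normal ∧ IsPiNat π (⊤ : Subgroup G).index :=
    ⟨inferInstance, index_top (G := G) ▸ IsPiNat.one⟩
  exact (hclosed.sInf_mem (Set.toFinite _) htop subset_rfl).2

theorem map_piResidual [Finite G] {Q : Type*} [Group Q] {f : G →* Q}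
    (hf : Function.Surjective f) : (piResidual π G).map f = piResidual π Q := by
  have := Finite.of_surjective f hf
  have := (piResidual_normal (π := π) (G := G)).map f hf
  refine le_antisymm ?_ (piResidual_le (isPiNat_index_piResidual.of_dvd (index_map_dvd _ hf)))
  rw [map_le_iff_le_comap]
  exact piResidual_le (by rw [index_comap_of_surjective _ hf]; exact isPiNat_index_piResidual)

theorem piResidualIn_le (H : Subgroup G) : piResidualIn π H ≤ H :=
  map_subtype_le _

theorem piResidualIn_le_piResidual [Finite G] (H : Subgroup G) :
    piResidualIn π H ≤ piResidual π G := by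
  rw [piResidualIn, map_le_iff_le_comap]
  exact piResidual_le (isPiNat_index_piResidual.of_dvd (relIndex_dvd_index_of_normal _ H))

theorem map_subtype_piResidualIn_subgroupOf [Finite G] {H K : Subgroup G} (hHK : H ≤ K) :
    (piResidualIn π (H.subgroupOf K)).map K.subtype = piResidualIn π H := by
  have hcomp : K.subtype.comp (H.subgroupOf K).subtype =
      H.subtype.comp (subgroupOfEquivOfLe hHK).toMonoidHom := rfl
  rw [piResidualIn, map_map, hcomp, ← map_map,
    map_piResidual (subgroupOfEquivOfLe hHK).surjective, piResidualIn]

theorem piResidualIn_subgroupOf [Finite G] {H K : Subgroup G} (hHK : H ≤ K) :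
    piResidualIn π (H.subgroupOf K) = (piResidualIn π H).subgroupOf K :=
  map_injective K.subtype_injective <| by
    rw [map_subtype_piResidualIn_subgroupOf hHK, subgroupOf_map_subtype,
      inf_eq_left.mpr ((piResidualIn_le H).trans hHK)]

end PiResidual

section Generation

variable {π : Set ℕ} {Q : Type*} [Group Q] [Finite Q]

theorem isPiGroup_of_piResidual_le_center {A B : Subgroup Q} (hAB : A ⊔ B = ⊤)
    (hA : IsPiGroup π A) (hB : IsPiGroup π B) (hR : piResidual π Q ≤ center Q) :
    IsPiGroup π Q := by
  -- `V g = g ^ [Q : Z(Q)]`; its image is a `π`-group, so it kills `O^π(Q)`.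
  set V := MonoidHom.transferCenterPow Q
  have hm : IsPiNat π (center Q).index := isPiNat_index_piResidual.of_dvd (index_dvd_of_le hR)
  have hV : IsPiGroup π V.range := by
    rw [MonoidHom.range_eq_map, ← hAB, Subgroup.map_sup]
    refine (hA.map V).sup_of_le_normalizer (hB.map V) ?_
    rw [normalizer_eq_top_iff.mpr inferInstance]
    exact le_top
  have hker : piResidual π Q ≤ V.ker := piResidual_le (by rwa [index_ker])
  have hRπ : IsPiGroup π (piResidual π Q) := isPiNat_card_of_pow_eq_one hm fun r => by
    have hr : V r = 1 := hker r.2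
    exact Subtype.ext <| (MonoidHom.transferCenterPow_apply (r : Q)).symm.trans
      (congrArg Subtype.val hr)
  exact isPiNat_card_of_subgroup _ hRπ isPiNat_index_piResidual

theorem isPiGroup_of_sup_eq_top {A B : Subgroup Q} (hAB : A ⊔ B = ⊤)
    (hA : IsPiGroup π A) (hB : IsPiGroup π B)
    (hRA : piResidual π Q ≤ normalizer A) (hRB : piResidual π Q ≤ normalizer B) :
    IsPiGroup π Q := by
  set R := piResidual π Q
  set S := (R ⊓ A) ⊔ (R ⊓ B)
  have := normal_inf_sup_inf hAB hRA hRB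
  have hSπ : IsPiGroup π S := by
    refine (hA.of_le inf_le_right).sup_of_le_normalizer (hB.of_le inf_le_right) ?_
    refine le_trans ?_ inf_normalizer_le_normalizer_inf
    rw [normalizer_eq_top_iff.mpr inferInstance]
    exact le_inf le_top (inf_le_left.trans hRB)
  set g := QuotientGroup.mk' S
  have hg : Function.Surjective g := QuotientGroup.mk'_surjective S
  have hAB' : A.map g ⊔ B.map g = ⊤ := by
    rw [← Subgroup.map_sup, hAB, map_top_of_surjective _ hg]
  have hcentral : ∀ C : Subgroup Q, R ≤ normalizer C → R ⊓ C ≤ S →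
      C.map g ≤ centralizer (R.map g) := by
    intro C hRC hCS
    rw [← commutator_eq_bot_iff_le_centralizer, ← map_commutator, commutator_comm,
      Subgroup.map_eq_bot_iff, QuotientGroup.ker_mk']
    exact (commutator_le_inf_of_le_normalizer hRC).trans hCS
  have hR : piResidual π (Q ⧸ S) ≤ center (Q ⧸ S) := by
    rw [← map_piResidual hg, ← centralizer_univ, ← coe_top, ← hAB', le_centralizer_iff]
    exact sup_le (hcentral A hRA le_sup_left) (hcentral B hRB le_sup_right)
  refine isPiNat_card_of_subgroup S hSπ ?_
  rw [index_eq_card]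
  exact isPiGroup_of_piResidual_le_center hAB' (hA.map g) (hB.map g) hR

theorem piResidual_eq_sup {A B : Subgroup Q} (hAB : A ⊔ B = ⊤)
    [(piResidualIn π A).Normal] [(piResidualIn π B).Normal]
    (hRA : piResidual π Q ≤ normalizer A) (hRB : piResidual π Q ≤ normalizer B) :
    piResidual π Q = piResidualIn π A ⊔ piResidualIn π B := by
  set N := piResidualIn π A ⊔ piResidualIn π B
  set g := QuotientGroup.mk' N
  have hg : Function.Surjective g := QuotientGroup.mk'_surjective N
  have hAB' : A.map g ⊔ B.map g = ⊤ := by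
    rw [← Subgroup.map_sup, hAB, map_top_of_surjective _ hg]
  have hπ : ∀ C : Subgroup Q, piResidualIn π C ≤ N → IsPiGroup π (C.map g) := by
    intro C hCN
    rw [isPiGroup_iff, ← Subgroup.range_subtype C, ← MonoidHom.range_comp, ← index_ker]
    refine isPiNat_index_piResidual.of_dvd (index_dvd_of_le fun c hc => ?_)
    simpa [g] using hCN (mem_map_of_mem C.subtype hc)
  have hnorm : ∀ C : Subgroup Q, piResidual π Q ≤ normalizer C →
      piResidual π (Q ⧸ N) ≤ normalizer (C.map g) := by
    intro C hRC
    rw [← map_piResidual hg]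
    exact (map_mono hRC).trans (le_normalizer_map g)
  refine le_antisymm (piResidual_le ?_)
    (sup_le (piResidualIn_le_piResidual A) (piResidualIn_le_piResidual B))
  rw [index_eq_card]
  exact isPiGroup_of_sup_eq_top hAB' (hπ A le_sup_left) (hπ B le_sup_right)
    (hnorm A hRA) (hnorm B hRB)

end Generation

theorem piResidualIn_sup {π : Set ℕ} {G : Type*} [Group G] [Finite G] {H K : Subgroup G}
    (hH : H ⊔ K ≤ normalizer (piResidualIn π H))
    (hK : H ⊔ K ≤ normalizer (piResidualIn π K))
    (hRH : piResidualIn π (H ⊔ K) ≤ normalizer H)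
    (hRK : piResidualIn π (H ⊔ K) ≤ normalizer K) :
    piResidualIn π (H ⊔ K) = piResidualIn π H ⊔ piResidualIn π K := by
  set X := H ⊔ K
  have hHX : H ≤ X := le_sup_left
  have hKX : K ≤ X := le_sup_right
  have hnormal : ∀ {C : Subgroup G}, C ≤ X → X ≤ normalizer (piResidualIn π C) →
      (piResidualIn π (C.subgroupOf X)).Normal := fun hCX h => by
    rwa [piResidualIn_subgroupOf hCX,
      normal_subgroupOf_iff_le_normalizer ((piResidualIn_le _).trans hCX)]
  have hnormalizer : ∀ {C : Subgroup G}, C ≤ X → piResidualIn π X ≤ normalizer C →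
      piResidual π X ≤ normalizer (C.subgroupOf X) := fun hCX h => by
    rw [← subgroupOf_normalizer_eq hCX]
    exact map_le_iff_le_comap.mp h
  have := hnormal hHX hH
  have := hnormal hKX hK
  have hsup : H.subgroupOf X ⊔ K.subgroupOf X = ⊤ := by
    rw [← subgroupOf_sup hHX hKX, subgroupOf_self]
  rw [piResidualIn, piResidual_eq_sup hsup (hnormalizer hHX hRH) (hnormalizer hKX hRK),
    Subgroup.map_sup, map_subtype_piResidualIn_subgroupOf hHX, map_subtype_piResidualIn_subgroupOf hKX]

theorem dnormal_sup_general (π : Set ℕ)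
    (G : Type*) [Group G] [Finite G] (H K : Subgroup G)
    (hH : IsDnormal π H) (hK : IsDnormal π K) :
    IsDnormal π (H ⊔ K) := by
  rcases hH with ⟨hπ, hH⟩ | ⟨hπ, hHres, hHnorm⟩
  · have hK : K.Normal := hK.elim And.right fun h => (h.1 hπ).elim
    exact Or.inl ⟨hπ, inferInstance⟩
  · obtain ⟨-, hKres, hKnorm⟩ := hK.resolve_left fun h => hπ h.1
    have hR : piResidualIn π (H ⊔ K) ≤ piResidual π G := piResidualIn_le_piResidual _
    refine Or.inr ⟨hπ, ?_, ?_⟩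
    · rw [piResidualIn_sup (le_top.trans (normalizer_eq_top_iff.mpr hHres).ge)
        (le_top.trans (normalizer_eq_top_iff.mpr hKres).ge) (hR.trans hHnorm) (hR.trans hKnorm)]
      infer_instance
    · exact (le_inf hHnorm hKnorm).trans (normalizer_inf_normalizer_le_normalizer_sup H K)

/-- Lemma 2.3: the join of two `N^π`-Dnormal subgroups is `N^π`-Dnormal. -/
theorem dnormal_sup (π : Set ℕ) (hπ : ∀ p ∈ π, p.Prime)
    (G : Type*) [Group G] [Finite G] (H K : Subgroup G)
    (hH : IsDnormal π H) (hK : IsDnormal π K) :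
    IsDnormal π (H ⊔ K) :=
  dnormal_sup_general π G H K hH hK
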